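/- arXiv:0909.4854 — 6 statements merged into one kernel-verified Lean document; each statement's English description precedes it below -/
import Mathlib

section
/- Let E be a complex Banach space and let 1 ≤ p ≤ q < ∞. Then the family of weak (p,q)-multi-norms (‖·‖_n^{(p,q)} : n ∈ ℕ) is a multi-norm over E; that is, each ‖·‖_n^{(p,q)} is a norm on E^n, ‖·‖_1^{(p,q)} coincides with the norm of E, and for all n ≥ 2 and x_1,…,x_n ∈ E: (A1) ‖(x_{σ(1)},…,x_{σ(n)})‖_n^{(p,q)} = ‖(x_1,…,x_n)‖_n^{(p,q)} for every permutation σ; (A2) ‖(α_1 x_1,…,α_n x_n)‖_n^{(p,q)} ≤ (max_i |α_i|)·‖(x_1,…,x_n)‖_n^{(p,q)} for α_i ∈ ℂ; (A3) ‖(x_1,…,x_{n-1},0)‖_n^{(p,q)} = ‖(x_1,…,x_{n-1})‖_{n-1}^{(p,q)}; (A4) ‖(x_1,…,x_{n-2},x_{n-1},x_{n-1})‖_n^{(p,q)} = ‖(x_1,…,x_{n-2},x_{n-1})‖_{n-1}^{(p,q)}. -/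
open MeasureTheory NormedSpace Set
open scoped ENNReal NNReal

/-- The weak `p`-summing norm of an `n`-tuple in a normed space `F`:
`μ_{p,n}(y) = sup { (∑ |λ(y_i)|^p)^{1/p} : λ ∈ F', ‖λ‖ ≤ 1 }`. -/
noncomputable def muP {F : Type*} [NormedAddCommGroup F] [NormedSpace ℂ F]
    (p : ℝ) {n : ℕ} (y : Fin n → F) : ℝ :=
  sSup { r : ℝ | ∃ l : StrongDual ℂ F, ‖l‖ ≤ 1 ∧ r = (∑ i, ‖l (y i)‖ ^ p) ^ (1 / p) }

/-- The weak `(p,q)`-multi-norm of an `n`-tuple in `E`: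
`‖x‖_n^{(p,q)} = sup { (∑ |λ_i(x_i)|^q)^{1/q} : λ ∈ (E')^n, μ_{p,n}(λ) ≤ 1 }`,
where `μ_{p,n}(λ)` is the weak `p`-summing norm computed in the dual space `E'`. -/
noncomputable def weakNorm {E : Type*} [NormedAddCommGroup E] [NormedSpace ℂ E]
    (p q : ℝ) {n : ℕ} (x : Fin n → E) : ℝ :=
  sSup { r : ℝ | ∃ l : Fin n → StrongDual ℂ E, muP p l ≤ 1 ∧
    r = (∑ i, ‖(l i) (x i)‖ ^ q) ^ (1 / q) }

/-!
Every property except (A4) comes from moving the test families `λ` around: permuting them,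
dropping a coordinate, or padding with the zero functional does not increase `μ_{p,n}(λ)`.

For (A4), the functionals `a = λ_{n-1}` and `b = λ_n`, which act on the same vector `z`, are
merged into one functional `c = s a + t b`, where `(s, t)` is a norming functional of
`(a z, b z)` in `ℓ^q_2`. Then `|c z|^q = |a z|^q + |b z|^q`, while every `Λ` in the unit ball of
`E''` satisfies `|Λ c| ≤ ‖(Λ a, Λ b)‖_q ≤ ‖(Λ a, Λ b)‖_p` as `p ≤ q`; so replacing the pair
`(a, b)` by `c` keeps the `q`-sum and does not increase the weak `p`-summing norm.
-/

theorem exists_combination_norming {𝕜 V ι : Type*} [RCLike 𝕜] [AddCommGroup V] [Module 𝕜 V]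
    [Fintype ι] {q : ℝ} (hq : 1 ≤ q) (v : ι → V) (φ : V →ₗ[𝕜] 𝕜) :
    ∃ c : V, ‖φ c‖ = (∑ j, ‖φ (v j)‖ ^ q) ^ (1 / q) ∧
      ∀ ψ : V →ₗ[𝕜] 𝕜, ‖ψ c‖ ≤ (∑ j, ‖ψ (v j)‖ ^ q) ^ (1 / q) := by
  classical
  have : Fact (1 ≤ ENNReal.ofReal q) := ⟨by simpa using hq⟩
  have hq' : (ENNReal.ofReal q).toReal = q := ENNReal.toReal_ofReal (by linarith)
  let T : (V →ₗ[𝕜] 𝕜) → PiLp (ENNReal.ofReal q) (fun _ : ι => 𝕜) :=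
    fun ψ => WithLp.toLp _ fun j => ψ (v j)
  have norm_T : ∀ ψ, ‖T ψ‖ = (∑ j, ‖ψ (v j)‖ ^ q) ^ (1 / q) := fun ψ => by
    rw [PiLp.norm_eq_sum (by rw [hq']; linarith), hq']
  obtain ⟨g, hg, hgφ⟩ := exists_dual_vector'' 𝕜 (T φ)
  let g' : (ι → 𝕜) →ₗ[𝕜] 𝕜 :=
    g.toLinearMap ∘ₗ (WithLp.linearEquiv _ 𝕜 (ι → 𝕜)).symm.toLinearMap
  set c := ∑ i, g' (fun j => if i = j then 1 else 0) • v i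
  have hc : ∀ ψ : V →ₗ[𝕜] 𝕜, ψ c = g (T ψ) := fun ψ => by
    simp only [c, map_sum, map_smul, smul_eq_mul]
    rw [show g (T ψ) = g' (fun j => ψ (v j)) from rfl, g'.pi_apply_eq_sum_univ]
    simp only [smul_eq_mul, mul_comm]
  refine ⟨c, ?_, fun ψ => ?_⟩
  · rw [hc, hgφ, RCLike.norm_ofReal, abs_norm, norm_T]
  · rw [hc, ← norm_T]
    exact (g.le_of_opNorm_le_of_le hg le_rfl).trans_eq (one_mul _)

theorem rpow_rpow_one_div {x p : ℝ} (hx : 0 ≤ x) (hp : p ≠ 0) : (x ^ p) ^ (1 / p) = x := by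
  rw [one_div, Real.rpow_rpow_inv hx hp]

section muP

variable {F : Type*} [NormedAddCommGroup F] [NormedSpace ℂ F] {p : ℝ} {m n : ℕ}

theorem le_muP (hp : 0 ≤ p) (y : Fin n → F) {L : StrongDual ℂ F} (hL : ‖L‖ ≤ 1) :
    (∑ i, ‖L (y i)‖ ^ p) ^ (1 / p) ≤ muP p y := by
  refine le_csSup ⟨(∑ i, ‖y i‖ ^ p) ^ (1 / p), ?_⟩ ⟨L, hL, rfl⟩
  rintro _ ⟨L', hL', rfl⟩
  gcongr with i
  exact (L'.le_of_opNorm_le_of_le hL' le_rfl).trans_eq (one_mul _)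

theorem muP_le (y : Fin n → F) {C : ℝ}
    (h : ∀ L : StrongDual ℂ F, ‖L‖ ≤ 1 → (∑ i, ‖L (y i)‖ ^ p) ^ (1 / p) ≤ C) :
    muP p y ≤ C :=
  csSup_le ⟨_, 0, by simp, rfl⟩ fun _ ⟨L, hL, hr⟩ => hr ▸ h L hL

theorem muP_le_muP (hp : 0 ≤ p) {y : Fin m → F} {y' : Fin n → F}
    (h : ∀ L : StrongDual ℂ F, ‖L‖ ≤ 1 → ∑ i, ‖L (y i)‖ ^ p ≤ ∑ i, ‖L (y' i)‖ ^ p) :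
    muP p y ≤ muP p y' :=
  muP_le y fun L hL => by
    grw [h L hL]
    exact le_muP hp y' hL

theorem muP_zero_le_one (hp : 0 < p) : muP p (0 : Fin n → F) ≤ 1 :=
  muP_le _ fun L _ => by simp [Real.zero_rpow hp.ne', Real.zero_rpow (inv_ne_zero hp.ne')]

theorem muP_single_le (hp : 0 < p) (j : Fin n) (g : F) : muP p (Pi.single j g) ≤ ‖g‖ :=
  muP_le _ fun L hL => by
    rw [Fintype.sum_eq_single j fun i hi => by simp [Pi.single_eq_of_ne hi, Real.zero_rpow hp.ne'],
      Pi.single_eq_same, rpow_rpow_one_div (norm_nonneg _) hp.ne']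
    exact (L.le_of_opNorm_le_of_le hL le_rfl).trans_eq (one_mul _)

theorem norm_le_muP (hp : 0 < p) (y : Fin n → F) (j : Fin n) : ‖y j‖ ≤ muP p y := by
  obtain ⟨L, hL, hLy⟩ := exists_dual_vector'' ℂ (y j)
  calc ‖y j‖ = (‖L (y j)‖ ^ p) ^ (1 / p) := by
        rw [hLy, RCLike.norm_ofReal, abs_norm, rpow_rpow_one_div (norm_nonneg _) hp.ne']
    _ ≤ (∑ i, ‖L (y i)‖ ^ p) ^ (1 / p) := by
        gcongr
        exact Finset.single_le_sum (f := fun i => ‖L (y i)‖ ^ p) (fun i _ => by positivity)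
          (Finset.mem_univ j)
    _ ≤ muP p y := le_muP hp.le y hL

theorem muP_init_le (hp : 0 ≤ p) (l : Fin (n + 1) → F) : muP p (Fin.init l) ≤ muP p l :=
  muP_le_muP hp fun L _ => by
    rw [Fin.sum_univ_castSucc (f := fun i => ‖L (l i)‖ ^ p)]
    exact le_add_of_nonneg_right (by positivity)

theorem muP_snoc_zero_le (hp : 0 < p) (l : Fin n → F) : muP p (Fin.snoc l (0 : F)) ≤ muP p l :=
  muP_le_muP hp.le fun L _ => by simp [Fin.sum_univ_castSucc, Real.zero_rpow hp.ne']

end muP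

section weakNorm

variable {E : Type*} [NormedAddCommGroup E] [NormedSpace ℂ E] {p q : ℝ} {m n : ℕ}

theorem rpow_sum_norm_apply_le (hp : 0 < p) (hq : 0 ≤ q) {l : Fin n → StrongDual ℂ E}
    (hl : muP p l ≤ 1) (x : Fin n → E) :
    (∑ i, ‖l i (x i)‖ ^ q) ^ (1 / q) ≤ (∑ i, ‖x i‖ ^ q) ^ (1 / q) := by
  gcongr with i
  exact ((l i).le_of_opNorm_le_of_le ((norm_le_muP hp l i).trans hl) le_rfl).trans_eq
    (one_mul _)

theorem le_weakNorm (hp : 0 < p) (hq : 0 ≤ q) (x : Fin n → E) {l : Fin n → StrongDual ℂ E}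
    (hl : muP p l ≤ 1) : (∑ i, ‖l i (x i)‖ ^ q) ^ (1 / q) ≤ weakNorm p q x :=
  le_csSup ⟨_, fun _ ⟨_, hl', hr⟩ => hr ▸ rpow_sum_norm_apply_le hp hq hl' x⟩ ⟨l, hl, rfl⟩

theorem weakNorm_le (hp : 0 < p) (x : Fin n → E) {C : ℝ}
    (h : ∀ l : Fin n → StrongDual ℂ E, muP p l ≤ 1 → (∑ i, ‖l i (x i)‖ ^ q) ^ (1 / q) ≤ C) :
    weakNorm p q x ≤ C :=
  csSup_le ⟨_, 0, muP_zero_le_one hp, rfl⟩ fun _ ⟨l, hl, hr⟩ => hr ▸ h l hl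

theorem weakNorm_nonneg (hp : 0 < p) (hq : 0 ≤ q) (x : Fin n → E) : 0 ≤ weakNorm p q x :=
  le_trans (by positivity) (le_weakNorm hp hq x (muP_zero_le_one hp))

theorem weakNorm_le_weakNorm (hp : 0 < p) (hq : 0 ≤ q) {x : Fin m → E} {x' : Fin n → E}
    (h : ∀ l : Fin m → StrongDual ℂ E, muP p l ≤ 1 → ∃ l' : Fin n → StrongDual ℂ E,
      muP p l' ≤ 1 ∧ ∑ i, ‖l i (x i)‖ ^ q ≤ ∑ i, ‖l' i (x' i)‖ ^ q) :
    weakNorm p q x ≤ weakNorm p q x' :=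
  weakNorm_le hp x fun l hl => by
    obtain ⟨l', hl', hsum⟩ := h l hl
    grw [hsum]
    exact le_weakNorm hp hq x' hl'

theorem norm_le_weakNorm (hp : 0 < p) (hq : 0 < q) (x : Fin n → E) (j : Fin n) :
    ‖x j‖ ≤ weakNorm p q x := by
  obtain ⟨g, hg, hgx⟩ := exists_dual_vector'' ℂ (x j)
  calc ‖x j‖ = (∑ i, ‖(Pi.single j g : Fin n → StrongDual ℂ E) i (x i)‖ ^ q) ^ (1 / q) := by
        rw [Fintype.sum_eq_single j fun i hi => by
            simp [Pi.single_eq_of_ne hi, Real.zero_rpow hq.ne'],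
          Pi.single_eq_same, hgx, RCLike.norm_ofReal, abs_norm,
          rpow_rpow_one_div (norm_nonneg _) hq.ne']
    _ ≤ weakNorm p q x := le_weakNorm hp hq.le x ((muP_single_le hp j g).trans hg)

theorem weakNorm_fin_one (hp : 0 < p) (hq : 0 < q) (x : E) :
    weakNorm p q (fun _ : Fin 1 => x) = ‖x‖ := by
  refine le_antisymm (weakNorm_le hp _ fun l hl => ?_) (norm_le_weakNorm hp hq (fun _ : Fin 1 => x) 0)
  simpa [Real.rpow_rpow_inv (norm_nonneg _) hq.ne'] using
    rpow_sum_norm_apply_le hp hq.le hl (fun _ : Fin 1 => x)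

theorem weakNorm_eq_zero_iff (hp : 0 < p) (hq : 0 < q) (x : Fin n → E) :
    weakNorm p q x = 0 ↔ x = 0 := by
  refine ⟨fun h => funext fun j => norm_le_zero_iff.mp (h ▸ norm_le_weakNorm hp hq x j), ?_⟩
  rintro rfl
  refine le_antisymm (weakNorm_le hp _ fun l _ => ?_) (weakNorm_nonneg hp hq.le _)
  simp [Real.zero_rpow hq.ne', Real.zero_rpow (inv_ne_zero hq.ne')]

theorem weakNorm_add_le (hp : 0 < p) (hq : 1 ≤ q) (x y : Fin n → E) :
    weakNorm p q (x + y) ≤ weakNorm p q x + weakNorm p q y :=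
  weakNorm_le hp _ fun l hl => calc
    (∑ i, ‖l i ((x + y) i)‖ ^ q) ^ (1 / q)
        ≤ (∑ i, (‖l i (x i)‖ + ‖l i (y i)‖) ^ q) ^ (1 / q) := by
          gcongr with i
          simpa using norm_add_le (l i (x i)) (l i (y i))
    _ ≤ (∑ i, ‖l i (x i)‖ ^ q) ^ (1 / q) + (∑ i, ‖l i (y i)‖ ^ q) ^ (1 / q) :=
          Real.Lp_add_le_of_nonneg (s := Finset.univ) hq (fun _ _ => norm_nonneg _) fun _ _ => norm_nonneg _
    _ ≤ weakNorm p q x + weakNorm p q y := by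
          gcongr <;> exact le_weakNorm hp (by linarith) _ hl

theorem weakNorm_smul_le_of_norm_le (hp : 0 < p) (hq : 0 < q) {α : Fin n → ℂ} {M : ℝ}
    (hM : 0 ≤ M) (hα : ∀ i, ‖α i‖ ≤ M) (x : Fin n → E) :
    weakNorm p q (fun i => α i • x i) ≤ M * weakNorm p q x :=
  weakNorm_le hp _ fun l hl => calc
    (∑ i, ‖l i (α i • x i)‖ ^ q) ^ (1 / q) ≤ (∑ i, M ^ q * ‖l i (x i)‖ ^ q) ^ (1 / q) := by
          gcongr with i
          rw [map_smul, smul_eq_mul, norm_mul, ← Real.mul_rpow hM (norm_nonneg _)]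
          gcongr
          exact hα i
    _ = M * (∑ i, ‖l i (x i)‖ ^ q) ^ (1 / q) := by
          rw [← Finset.mul_sum, Real.mul_rpow (by positivity) (by positivity),
            rpow_rpow_one_div hM hq.ne']
    _ ≤ M * weakNorm p q x := by
          gcongr
          exact le_weakNorm hp hq.le x hl

theorem weakNorm_smul (hp : 0 < p) (hq : 0 < q) (c : ℂ) (x : Fin n → E) :
    weakNorm p q (c • x) = ‖c‖ * weakNorm p q x := by
  have smul_le (c : ℂ) (x : Fin n → E) : weakNorm p q (c • x) ≤ ‖c‖ * weakNorm p q x :=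
    weakNorm_smul_le_of_norm_le hp hq (norm_nonneg c) (fun _ => le_rfl) x
  refine le_antisymm (smul_le c x) ?_
  rcases eq_or_ne c 0 with rfl | hc
  · simpa using weakNorm_nonneg hp hq.le _
  calc ‖c‖ * weakNorm p q x = ‖c‖ * weakNorm p q (c⁻¹ • c • x) := by rw [inv_smul_smul₀ hc]
    _ ≤ ‖c‖ * (‖c⁻¹‖ * weakNorm p q (c • x)) := by grw [smul_le c⁻¹ (c • x)]
    _ = weakNorm p q (c • x) := by rw [norm_inv, mul_inv_cancel_left₀ (norm_ne_zero_iff.mpr hc)]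

theorem weakNorm_comp_perm_le (hp : 0 < p) (hq : 0 ≤ q) (σ : Equiv.Perm (Fin n))
    (x : Fin n → E) : weakNorm p q (x ∘ σ) ≤ weakNorm p q x :=
  weakNorm_le_weakNorm hp hq fun l hl =>
    ⟨l ∘ σ.symm,
      (muP_le_muP hp.le fun L _ => (Equiv.sum_comp σ.symm fun i => ‖L (l i)‖ ^ p).le).trans hl,
      by rw [← Equiv.sum_comp σ fun i => ‖(l ∘ σ.symm) i (x i)‖ ^ q]; simp⟩

theorem weakNorm_comp_perm (hp : 0 < p) (hq : 0 ≤ q) (σ : Equiv.Perm (Fin n))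
    (x : Fin n → E) : weakNorm p q (x ∘ σ) = weakNorm p q x :=
  le_antisymm (weakNorm_comp_perm_le hp hq σ x) <| by
    simpa [Function.comp_assoc] using weakNorm_comp_perm_le hp hq σ.symm (x ∘ σ)

theorem weakNorm_le_weakNorm_snoc (hp : 0 < p) (hq : 0 < q) (x : Fin n → E) (z : E) :
    weakNorm p q x ≤ weakNorm p q (Fin.snoc x z) :=
  weakNorm_le_weakNorm hp hq.le fun l hl =>
    ⟨Fin.snoc l 0, (muP_snoc_zero_le hp l).trans hl,
      by simp [Fin.sum_univ_castSucc, Real.zero_rpow hq.ne']⟩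

theorem weakNorm_snoc_zero (hp : 0 < p) (hq : 0 < q) (x : Fin n → E) :
    weakNorm p q (Fin.snoc x (0 : E)) = weakNorm p q x := by
  refine le_antisymm ?_ (weakNorm_le_weakNorm_snoc hp hq x 0)
  exact weakNorm_le_weakNorm hp hq.le fun l hl =>
    ⟨Fin.init l, (muP_init_le hp.le l).trans hl,
      by simp [Fin.sum_univ_castSucc, Fin.init, Real.zero_rpow hq.ne']⟩

theorem weakNorm_snoc_last_le (hp : 0 < p) (hpq : p ≤ q) (hq : 1 ≤ q) (x : Fin (n + 1) → E) :
    weakNorm p q (Fin.snoc x (x (Fin.last n))) ≤ weakNorm p q x := by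
  refine weakNorm_le_weakNorm hp (by linarith) fun l hl => ?_
  set z := x (Fin.last n)
  set a := l (Fin.last n).castSucc
  set b := l (Fin.last (n + 1))
  obtain ⟨c, hcz, hcL⟩ := exists_combination_norming hq ![a, b]
    (ContinuousLinearMap.apply ℂ ℂ z).toLinearMap
  simp only [Fin.sum_univ_two] at hcz hcL
  refine ⟨Fin.snoc (Fin.init (Fin.init l)) c, (muP_le_muP hp.le fun L _ => ?_).trans hl, ?_⟩
  · have hLc : ‖L c‖ ^ p ≤ ‖L a‖ ^ p + ‖L b‖ ^ p := by
      rw [← Real.le_rpow_inv_iff_of_pos (norm_nonneg _) (by positivity) hp, ← one_div]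
      exact (hcL L.toLinearMap).trans
        (Real.rpow_add_rpow_le (norm_nonneg _) (norm_nonneg _) hp hpq)
    simp only [Fin.sum_univ_castSucc, Fin.snoc_castSucc, Fin.snoc_last, Fin.init]
    linarith
  · have hcz' : ‖c z‖ ^ q = ‖a z‖ ^ q + ‖b z‖ ^ q := by
      rw [← Real.rpow_inv_rpow (by positivity : 0 ≤ ‖a z‖ ^ q + ‖b z‖ ^ q) (by linarith : q ≠ 0)]
      simpa [one_div] using congrArg (· ^ q) hcz
    simp only [Fin.sum_univ_castSucc, Fin.snoc_castSucc, Fin.snoc_last, Fin.init]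
    linarith

theorem weakNorm_snoc_last (hp : 0 < p) (hpq : p ≤ q) (hq : 1 ≤ q) (x : Fin (n + 1) → E) :
    weakNorm p q (Fin.snoc x (x (Fin.last n))) = weakNorm p q x :=
  le_antisymm (weakNorm_snoc_last_le hp hpq hq x)
    (weakNorm_le_weakNorm_snoc hp (by linarith) x _)

end weakNorm

theorem stmt1_general (p q : ℝ) (hp : 1 ≤ p) (hpq : p ≤ q)
    (E : Type*) [NormedAddCommGroup E] [NormedSpace ℂ E] :
    -- each `‖·‖_n^{(p,q)}` is a norm on `E^n`:
    (∀ (n : ℕ) (x : Fin n → E), weakNorm p q x = 0 ↔ x = 0) ∧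
    (∀ (n : ℕ) (x y : Fin n → E), weakNorm p q (x + y) ≤ weakNorm p q x + weakNorm p q y) ∧
    (∀ (n : ℕ) (c : ℂ) (x : Fin n → E), weakNorm p q (c • x) = ‖c‖ * weakNorm p q x) ∧
    -- `‖·‖_1^{(p,q)}` is the norm of `E`:
    (∀ x : E, weakNorm p q (fun _ : Fin 1 => x) = ‖x‖) ∧
    -- (A1):
    (∀ (n : ℕ) (σ : Equiv.Perm (Fin n)) (x : Fin n → E),
      weakNorm p q (x ∘ σ) = weakNorm p q x) ∧
    -- (A2):
    (∀ (n : ℕ) (α : Fin (n + 1) → ℂ) (x : Fin (n + 1) → E),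
      weakNorm p q (fun i => α i • x i) ≤ (⨆ i, ‖α i‖) * weakNorm p q x) ∧
    -- (A3):
    (∀ (n : ℕ) (x : Fin (n + 1) → E),
      weakNorm p q (Fin.snoc x (0 : E)) = weakNorm p q x) ∧
    -- (A4):
    (∀ (n : ℕ) (x : Fin (n + 1) → E),
      weakNorm p q (Fin.snoc x (x (Fin.last n))) = weakNorm p q x) := by
  have hp₀ : 0 < p := by linarith
  have hq₀ : 0 < q := by linarith
  exact ⟨fun n x => weakNorm_eq_zero_iff hp₀ hq₀ x,
    fun n x y => weakNorm_add_le hp₀ (hp.trans hpq) x y,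
    fun n c x => weakNorm_smul hp₀ hq₀ c x,
    weakNorm_fin_one hp₀ hq₀,
    fun n σ x => weakNorm_comp_perm hp₀ hq₀.le σ x,
    fun n α x => weakNorm_smul_le_of_norm_le hp₀ hq₀ (Real.iSup_nonneg fun i => norm_nonneg _)
      (le_ciSup (Finite.bddAbove_range _)) x,
    fun n x => weakNorm_snoc_zero hp₀ hq₀ x,
    fun n x => weakNorm_snoc_last hp₀ hpq (hp.trans hpq) x⟩

/-- for `1 ≤ p ≤ q < ∞`, the family of weak `(p,q)`-multi-norms is a
multi-norm over `E`: each level is a norm on `E^n`, level `1` is the norm of `E`, and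
axioms (A1)-(A4) hold. -/
theorem stmt1 (p q : ℝ) (hp : 1 ≤ p) (hpq : p ≤ q)
    (E : Type*) [NormedAddCommGroup E] [NormedSpace ℂ E] [CompleteSpace E] :
    -- each `‖·‖_n^{(p,q)}` is a norm on `E^n`:
    (∀ (n : ℕ) (x : Fin n → E), weakNorm p q x = 0 ↔ x = 0) ∧
    (∀ (n : ℕ) (x y : Fin n → E), weakNorm p q (x + y) ≤ weakNorm p q x + weakNorm p q y) ∧
    (∀ (n : ℕ) (c : ℂ) (x : Fin n → E), weakNorm p q (c • x) = ‖c‖ * weakNorm p q x) ∧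
    -- `‖·‖_1^{(p,q)}` is the norm of `E`:
    (∀ x : E, weakNorm p q (fun _ : Fin 1 => x) = ‖x‖) ∧
    -- (A1):
    (∀ (n : ℕ) (σ : Equiv.Perm (Fin n)) (x : Fin n → E),
      weakNorm p q (x ∘ σ) = weakNorm p q x) ∧
    -- (A2):
    (∀ (n : ℕ) (α : Fin (n + 1) → ℂ) (x : Fin (n + 1) → E),
      weakNorm p q (fun i => α i • x i) ≤ (⨆ i, ‖α i‖) * weakNorm p q x) ∧
    -- (A3):
    (∀ (n : ℕ) (x : Fin (n + 1) → E),
      weakNorm p q (Fin.snoc x (0 : E)) = weakNorm p q x) ∧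
    -- (A4):
    (∀ (n : ℕ) (x : Fin (n + 1) → E),
      weakNorm p q (Fin.snoc x (x (Fin.last n))) = weakNorm p q x) :=
  stmt1_general p q hp hpq E
end

section
/- Let Ω be a measurable space and let μ_1,…,μ_n be finite (positive) measures on Ω. Then the least upper bound μ_1 ⊔ ⋯ ⊔ μ_n in the lattice of measures satisfies (μ_1 ⊔ ⋯ ⊔ μ_n)(Ω) = sup { ∑_{i=1}^n μ_i(X_i) : (X_1,…,X_n) a measurable partition of Ω }. Moreover (for n ≥ 2) this supremum is attained: there exists a measurable partition (X_1,…,X_n) of Ω with (μ_1 ⊔ ⋯ ⊔ μ_n)(Ω) = ∑_{i=1}^n μ_i(X_i). -/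
open MeasureTheory Set
open scoped ENNReal

private lemma sum_part_le {Ω : Type*} [MeasurableSpace Ω] {n : ℕ} (μ : Fin n → Measure Ω)
    (X : Fin n → Set Ω) (hmeas : ∀ i, MeasurableSet (X i))
    (hdisj : Pairwise (Function.onFun Disjoint X)) (hcover : (⋃ i, X i) = Set.univ) :
    ∑ i, μ i (X i) ≤ (⨆ i, μ i) Set.univ := by
  calc ∑ i, μ i (X i) ≤ ∑ i, (⨆ j, μ j) (X i) :=
        Finset.sum_le_sum fun i _ => Measure.le_iff'.mp (le_iSup μ i) (X i)
    _ = (⨆ j, μ j) Set.univ := by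
        rw [← hcover, measure_iUnion hdisj hmeas, tsum_fintype]

private lemma key_partition {Ω : Type*} [MeasurableSpace Ω] {n : ℕ} (hn : 0 < n)
    (μ : Fin n → Measure Ω) (hfin : ∀ i, IsFiniteMeasure (μ i)) :
    ∃ X : Fin n → Set Ω, (∀ i, MeasurableSet (X i)) ∧
      Pairwise (Function.onFun Disjoint X) ∧ (⋃ i, X i) = Set.univ ∧
      (⨆ i, μ i) Set.univ = ∑ i, μ i (X i) := by
  haveI := hfin
  set ν := Measure.sum μ with hν
  haveI : SigmaFinite ν := by
    haveI : IsFiniteMeasure ν := by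
      constructor
      rw [hν, Measure.sum_apply _ MeasurableSet.univ, tsum_fintype]
      exact ENNReal.sum_lt_top.mpr fun i _ => measure_lt_top _ _
    infer_instance
  set f := fun i => (μ i).rnDeriv ν with hf
  have hfmeas : ∀ i, Measurable (f i) := fun i => Measure.measurable_rnDeriv _ _
  have hac : ∀ i, μ i ≪ ν := fun i => (Measure.le_sum μ i).absolutelyContinuous
  have hwd : ∀ i, ν.withDensity (f i) = μ i := fun i =>
    Measure.withDensity_rnDeriv_eq _ _ (hac i)
  set A : Fin n → Set Ω := fun i => {ω | ∀ k, f k ω ≤ f i ω} with hA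
  have hAmeas : ∀ i, MeasurableSet (A i) := by
    intro i
    have : A i = ⋂ k, {ω | f k ω ≤ f i ω} := by ext ω; simp [hA]
    rw [this]
    exact MeasurableSet.iInter fun k => measurableSet_le (hfmeas k) (hfmeas i)
  have hAcover : (⋃ i, A i) = Set.univ := by
    ext ω
    simp only [mem_iUnion, mem_univ, iff_true]
    obtain ⟨i, -, hi⟩ := Finset.exists_max_image Finset.univ (fun k => f k ω)
      ⟨⟨0, hn⟩, Finset.mem_univ _⟩
    exact ⟨i, fun k => hi k (Finset.mem_univ _)⟩
  set B : ℕ → Set Ω := fun k => if h : k < n then A ⟨k, h⟩ else ∅ with hB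
  set X : Fin n → Set Ω := fun i => disjointed B i with hX
  have hBmeas : ∀ k, MeasurableSet (B k) := by
    intro k
    rw [hB]
    dsimp only
    split
    · exact hAmeas _
    · exact MeasurableSet.empty
  have hXmeas : ∀ i, MeasurableSet (X i) := fun i => MeasurableSet.disjointed hBmeas i
  have hXdisj : Pairwise (Function.onFun Disjoint X) := fun i j hij =>
    disjoint_disjointed B (fun h => hij (Fin.val_injective h))
  have hXsub : ∀ i, X i ⊆ A i := by
    intro i
    have h1 := disjointed_subset B i
    have h2 : B (i : ℕ) = A i := by rw [hB]; simp [i.isLt]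
    rw [hX]; dsimp only; rw [← h2]; exact h1
  have hXcover : (⋃ i, X i) = Set.univ := by
    have h1 : (⋃ i : Fin n, X i) = ⋃ k : ℕ, disjointed B k := by
      refine Subset.antisymm
        (iUnion_subset fun i => subset_iUnion (fun k => disjointed B k) (i : ℕ)) ?_
      intro ω hω
      obtain ⟨k, hk⟩ := mem_iUnion.mp hω
      by_cases hkn : k < n
      · exact mem_iUnion.mpr ⟨⟨k, hkn⟩, hk⟩
      · have := disjointed_subset B k hk
        rw [hB] at this
        simp [hkn] at this
    rw [h1, iUnion_disjointed]
    apply Subset.antisymm (subset_univ _)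
    rw [← hAcover]
    refine iUnion_subset fun i => ?_
    have h2 : B (i : ℕ) = A i := by rw [hB]; simp [i.isLt]
    rw [← h2]
    exact subset_iUnion B (i : ℕ)
  refine ⟨X, hXmeas, hXdisj, hXcover, ?_⟩
  refine le_antisymm ?_ (sum_part_le μ X hXmeas hXdisj hXcover)
  -- the measure ∑ᵢ μᵢ restricted to Xᵢ is an upper bound
  set m : Measure Ω := Measure.sum (fun i : Fin n => (μ i).restrict (X i)) with hm
  have hmapp : ∀ E : Set Ω, MeasurableSet E → m E = ∑ i, μ i (E ∩ X i) := by
    intro E hE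
    rw [hm, Measure.sum_apply _ hE, tsum_fintype]
    exact Finset.sum_congr rfl fun i _ => Measure.restrict_apply hE
  have hub : ∀ j, μ j ≤ m := by
    intro j
    rw [Measure.le_iff]
    intro E hE
    have hEsplit : μ j E = ∑ i, μ j (E ∩ X i) := by
      conv_lhs => rw [show E = ⋃ i, E ∩ X i by rw [← inter_iUnion, hXcover, inter_univ]]
      rw [measure_iUnion (fun i j hij => ((hXdisj hij).mono inter_subset_right
        inter_subset_right)) (fun i => hE.inter (hXmeas i)), tsum_fintype]
    rw [hEsplit, hmapp E hE]
    refine Finset.sum_le_sum fun i _ => ?_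
    rw [← hwd j, ← hwd i, withDensity_apply _ (hE.inter (hXmeas i)),
      withDensity_apply _ (hE.inter (hXmeas i))]
    exact setLIntegral_mono (hfmeas i) fun ω hω => hXsub i hω.2 j
  calc (⨆ i, μ i) Set.univ ≤ m Set.univ := Measure.le_iff'.mp (iSup_le hub) Set.univ
    _ = ∑ i, μ i (X i) := by
        rw [hmapp Set.univ MeasurableSet.univ]
        exact Finset.sum_congr rfl fun i _ => by rw [univ_inter]

/-- for finite measures `μ_1,…,μ_n` on a measurable space `Ω`, the least upper
bound `μ_1 ⊔ ⋯ ⊔ μ_n` in the lattice of measures satisfies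
`(μ_1 ⊔ ⋯ ⊔ μ_n)(Ω) = sup { ∑ μ_i(X_i) : (X_1,…,X_n) a measurable partition of Ω }`,
and for `n ≥ 2` this supremum is attained by some measurable partition. -/
theorem stmt6 {Ω : Type*} [MeasurableSpace Ω] (n : ℕ) (μ : Fin n → Measure Ω)
    (hfin : ∀ i, IsFiniteMeasure (μ i)) :
    (⨆ i, μ i) Set.univ =
      sSup { r : ℝ≥0∞ | ∃ X : Fin n → Set Ω, (∀ i, MeasurableSet (X i)) ∧
        Pairwise (Function.onFun Disjoint X) ∧ (⋃ i, X i) = Set.univ ∧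
        r = ∑ i, μ i (X i) } ∧
    (2 ≤ n → ∃ X : Fin n → Set Ω, (∀ i, MeasurableSet (X i)) ∧
        Pairwise (Function.onFun Disjoint X) ∧ (⋃ i, X i) = Set.univ ∧
        (⨆ i, μ i) Set.univ = ∑ i, μ i (X i)) := by
  have hsSup_le : sSup { r : ℝ≥0∞ | ∃ X : Fin n → Set Ω, (∀ i, MeasurableSet (X i)) ∧
      Pairwise (Function.onFun Disjoint X) ∧ (⋃ i, X i) = Set.univ ∧
      r = ∑ i, μ i (X i) } ≤ (⨆ i, μ i) Set.univ := by
    refine sSup_le fun r hr => ?_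
    obtain ⟨X, hmeas, hdisj, hcover, hr⟩ := hr
    rw [hr]
    exact sum_part_le μ X hmeas hdisj hcover
  rcases Nat.eq_zero_or_pos n with h0 | hpos
  · subst h0
    constructor
    · refine le_antisymm ?_ hsSup_le
      have : (⨆ i : Fin 0, μ i) = ⊥ := iSup_of_empty μ
      rw [this]
      have hbot : (⊥ : Measure Ω) = 0 := rfl
      rw [hbot]
      simp
    · intro h; omega
  · obtain ⟨X, hmeas, hdisj, hcover, heq⟩ := key_partition hpos μ hfin
    have hmem : (∑ i, μ i (X i)) ∈ { r : ℝ≥0∞ | ∃ X : Fin n → Set Ω,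
        (∀ i, MeasurableSet (X i)) ∧ Pairwise (Function.onFun Disjoint X) ∧
        (⋃ i, X i) = Set.univ ∧ r = ∑ i, μ i (X i) } := ⟨X, hmeas, hdisj, hcover, rfl⟩
    exact ⟨le_antisymm (heq ▸ le_sSup hmem) hsSup_le,
      fun _ => ⟨X, hmeas, hdisj, hcover, heq⟩⟩
end

section
/- Let G be a locally compact Hausdorff topological group with left Haar measure m. Let S_1 ⊆ S_2 ⊆ ⋯ ⊆ S_N be measurable subsets of G with m(S_N) < ∞, let β_1,…,β_N ≥ 0, and set f = ∑_{k=1}^N β_k χ_{S_k}. Let s_1,…,s_n ∈ G and set F = {s_1,…,s_n}. Then ∫_G max_{1≤i≤n} f(s_i^{-1} t) dm(t) = ∑_{k=1}^N β_k · m(F S_k), where F S_k = ⋃_{i=1}^n s_i S_k. (Equivalently: the weak (1,1)-multi-norm of the tuple of translates (s_1·f,…,s_n·f) in L^1(G,m) equals ∑_{k=1}^N β_k m(F S_k).) -/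
/-!
Translating `χ_S` by `s` gives `χ_{s S}`. For a fixed point `t`, the indices `k` with
`t ∈ s_i S_k` form a final segment of the chain for every `i`, so the `i` whose segment starts at
the least `k` with `t ∈ F S_k` dominates all the others; hence
`max_i ∑_k β_k χ_{s_i S_k}(t) = ∑_k β_k χ_{F S_k}(t)`, and integrating gives the formula.
-/

open MeasureTheory Set
open scoped ENNReal Pointwise

theorem Set.indicator_const_inv_mul_apply {G β : Type*} [Group G] [Zero β] (S : Set G) (c : β)
    (s t : G) : S.indicator (fun _ => c) (s⁻¹ * t) = (s • S).indicator (fun _ => c) t := by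
  rw [← preimage_smul_inv, ← indicator_comp_right]
  rfl

theorem Set.exists_forall_mem_iUnion_imp_mem_of_monotone {α ι κ : Type*} [Nonempty ι]
    [LinearOrder κ] [WellFoundedLT κ] (A : ι → κ → Set α) (hA : ∀ i, Monotone (A i)) (t : α) :
    ∃ i₀, ∀ k, t ∈ ⋃ i, A i k → t ∈ A i₀ k := by
  by_cases h : ∃ k, t ∈ ⋃ i, A i k
  · obtain ⟨k₀, hk₀, hmin⟩ := WellFounded.has_min wellFounded_lt _ h
    obtain ⟨i₀, hi₀⟩ := mem_iUnion.mp hk₀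
    exact ⟨i₀, fun k hk => hA i₀ (not_lt.mp (hmin k hk)) hi₀⟩
  · exact ⟨Classical.arbitrary ι, fun k hk => absurd ⟨k, hk⟩ h⟩

theorem iSup_sum_mul_indicator_of_monotone {α ι κ : Type*} [Fintype κ] [LinearOrder κ]
    (A : ι → κ → Set α) (hA : ∀ i, Monotone (A i)) (β : κ → ℝ) (hβ : ∀ k, 0 ≤ β k) (t : α) :
    ⨆ i, ∑ k, β k * (A i k).indicator (fun _ => (1 : ℝ)) t =
      ∑ k, β k * (⋃ i, A i k).indicator (fun _ => (1 : ℝ)) t := by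
  rcases isEmpty_or_nonempty ι with hι | hι
  · simp
  have hle : ∀ i, ∑ k, β k * (A i k).indicator (fun _ => (1 : ℝ)) t ≤
      ∑ k, β k * (⋃ i, A i k).indicator (fun _ => (1 : ℝ)) t := fun i =>
    Finset.sum_le_sum fun k _ => mul_le_mul_of_nonneg_left
      (indicator_le_indicator_of_subset (subset_iUnion (A · k) i) (fun _ => zero_le_one) t) (hβ k)
  obtain ⟨i₀, hi₀⟩ := exists_forall_mem_iUnion_imp_mem_of_monotone A hA t
  have hattained : ∑ k, β k * (A i₀ k).indicator (fun _ => (1 : ℝ)) t =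
      ∑ k, β k * (⋃ i, A i k).indicator (fun _ => (1 : ℝ)) t := by
    refine Finset.sum_congr rfl fun k _ => ?_
    have hmem : t ∈ A i₀ k ↔ t ∈ ⋃ i, A i k := ⟨fun h => mem_iUnion_of_mem i₀ h, hi₀ k⟩
    classical
    simp only [indicator_apply, if_congr hmem rfl rfl]
  exact le_antisymm (ciSup_le hle) (le_ciSup_of_le ⟨_, forall_mem_range.mpr hle⟩ i₀ hattained.ge)

theorem integral_sum_mul_indicator_one {α κ : Type*} [MeasurableSpace α] [Fintype κ]
    (μ : Measure α) (T : κ → Set α) (hTm : ∀ k, MeasurableSet (T k)) (hTfin : ∀ k, μ (T k) ≠ ∞)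
    (β : κ → ℝ) :
    ∫ t, ∑ k, β k * (T k).indicator (fun _ => (1 : ℝ)) t ∂μ = ∑ k, β k * μ.real (T k) := by
  have hint : ∀ k, Integrable ((T k).indicator fun _ => (1 : ℝ)) μ := fun k =>
    (integrable_indicator_iff (hTm k)).mpr (integrableOn_const (hTfin k))
  rw [integral_finsetSum _ fun k _ => (hint k).const_mul (β k)]
  refine Finset.sum_congr rfl fun k _ => ?_
  rw [integral_const_mul, integral_indicator_const _ (hTm k), smul_eq_mul, mul_one]

theorem stmt14_general (G : Type*) [Group G] [TopologicalSpace G] [IsTopologicalGroup G]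
    [MeasurableSpace G] [BorelSpace G]
    (m : Measure G) [m.IsHaarMeasure]
    (N : ℕ) (S : Fin N → Set G) (hSm : ∀ k, MeasurableSet (S k))
    (hmono : ∀ k l : Fin N, k ≤ l → S k ⊆ S l)
    (hSfin : ∀ k, m (S k) < ⊤)
    (β : Fin N → ℝ) (hβ : ∀ k, 0 ≤ β k)
    (n : ℕ) (s : Fin n → G) :
    (∫ t, (⨆ i, ∑ k, β k * (S k).indicator (fun _ => (1 : ℝ)) ((s i)⁻¹ * t)) ∂m) =
      ∑ k, β k * (m (⋃ i, (s i) • S k)).toReal := by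
  have hmono_smul : ∀ i, Monotone fun k => s i • S k := fun i _ _ hkl =>
    smul_set_mono (hmono _ _ hkl)
  have hfin : ∀ k, m (⋃ i, s i • S k) ≠ ⊤ := fun k =>
    ((measure_iUnion_fintype_le _ _).trans_lt
      (ENNReal.sum_lt_top.mpr fun i _ => (measure_smul m (s i) (S k)).trans_lt (hSfin k))).ne
  simp_rw [indicator_const_inv_mul_apply, iSup_sum_mul_indicator_of_monotone _ hmono_smul β hβ]
  exact integral_sum_mul_indicator_one m _
    (fun k => .iUnion fun i => (hSm k).const_smul (s i)) hfin β

/-- let `G` be a locally compact Hausdorff group with left Haar measure `m`,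
let `S_1 ⊆ ⋯ ⊆ S_N` be measurable subsets of `G` of finite measure, let `β_k ≥ 0`, and set
`f = ∑ β_k χ_{S_k}`.  For `s_1,…,s_n ∈ G` (with `F = {s_1,…,s_n}`):
`∫_G max_i f(s_i⁻¹ t) dm(t) = ∑_k β_k · m(F S_k)`, where `F S_k = ⋃_i s_i S_k`.
(The left-hand side is the weak `(1,1)`-multi-norm of the tuple of translates
`(s_1·f,…,s_n·f)` in `L^1(G,m)`.) -/
theorem stmt14 (G : Type*) [Group G] [TopologicalSpace G] [IsTopologicalGroup G]
    [LocallyCompactSpace G] [T2Space G] [MeasurableSpace G] [BorelSpace G]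
    (m : Measure G) [m.IsHaarMeasure]
    (N : ℕ) (S : Fin N → Set G) (hSm : ∀ k, MeasurableSet (S k))
    (hmono : ∀ k l : Fin N, k ≤ l → S k ⊆ S l)
    (hSfin : ∀ k, m (S k) < ⊤)
    (β : Fin N → ℝ) (hβ : ∀ k, 0 ≤ β k)
    (n : ℕ) (s : Fin n → G) :
    (∫ t, (⨆ i, ∑ k, β k * (S k).indicator (fun _ => (1 : ℝ)) ((s i)⁻¹ * t)) ∂m) =
      ∑ k, β k * (m (⋃ i, (s i) • S k)).toReal :=
  stmt14_general G m N S hSm hmono hSfin β hβ n s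
end

section
/- Let n ∈ ℕ, let 1 ≤ p < ∞, let E be a normed space, and let F : {1,…,n} × {1,…,n} → E. Suppose C ≥ 0 is such that for every choice of signs (d_1,…,d_n) ∈ {−1,1}^n one has (∑_{j=1}^n ‖∑_{i=1}^n d_i F(i,j)‖^p)^{1/p} ≤ C. Then (∑_{j=1}^n ‖F(j,j)‖^p)^{1/p} ≤ C. -/
noncomputable def eps (b : Bool) : ℝ := if b then 1 else -1

lemma eps_sq (b : Bool) : eps b * eps b = 1 := by cases b <;> simp [eps]

lemma eps_not (b : Bool) : eps (!b) = - eps b := by cases b <;> simp [eps]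

lemma orth (n : ℕ) (i j : Fin n) (hij : i ≠ j) :
    ∑ s : Fin n → Bool, eps (s i) * eps (s j) = 0 := by
  classical
  apply Finset.sum_ninvolution (fun s => Function.update s i (!s i))
  · intro s
    have h1 : Function.update s i (!s i) i = !s i := by simp
    have h2 : Function.update s i (!s i) j = s j := Function.update_of_ne (Ne.symm hij) _ _
    rw [h1, h2, eps_not]
    ring
  · intro s _
    intro hcon
    have := congrFun hcon i
    simp at this
  · intro s; simp
  · intro s
    funext k
    by_cases hk : k = i
    · subst hk; simp
    · simp [Function.update_of_ne hk]

lemma orth_diag (n : ℕ) (j : Fin n) :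
    ∑ s : Fin n → Bool, eps (s j) * eps (s j) = 2 ^ n := by
  classical
  have : ∀ s : Fin n → Bool, eps (s j) * eps (s j) = 1 := fun s => eps_sq _
  simp only [this, Finset.sum_const, Finset.card_univ, Fintype.card_fun,
    Fintype.card_bool, Fintype.card_fin, nsmul_eq_mul, mul_one]
  push_cast; ring

/-- let `1 ≤ p < ∞`, `E` a normed space and `F : {1,…,n}² → E`.  If
`(∑_j ‖∑_i d_i F(i,j)‖^p)^{1/p} ≤ C` for every choice of signs `d ∈ {−1,1}^n`, then
`(∑_j ‖F(j,j)‖^p)^{1/p} ≤ C`. -/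
theorem stmt16 (n : ℕ) (p : ℝ) (hp : 1 ≤ p)
    (E : Type*) [NormedAddCommGroup E] [NormedSpace ℝ E]
    (F : Fin n → Fin n → E) (C : ℝ) (hC : 0 ≤ C)
    (h : ∀ d : Fin n → ℝ, (∀ i, d i = 1 ∨ d i = -1) →
      (∑ j, ‖∑ i, d i • F i j‖ ^ p) ^ (1 / p) ≤ C) :
    (∑ j, ‖F j j‖ ^ p) ^ (1 / p) ≤ C := by
  classical
  have hp0 : 0 < p := lt_of_lt_of_le one_pos hp
  set S : (Fin n → Bool) → Fin n → E := fun s j => ∑ i, eps (s i) • F i j with hS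
  -- identity: (2^n) • F j j = ∑ s, eps (s j) • S s j
  have key : ∀ j : Fin n, ((2:ℝ) ^ n) • F j j = ∑ s : Fin n → Bool, eps (s j) • S s j := by
    intro j
    have : ∑ s : Fin n → Bool, eps (s j) • S s j
        = ∑ i, (∑ s : Fin n → Bool, eps (s j) * eps (s i)) • F i j := by
      simp only [hS, Finset.smul_sum, Finset.sum_comm (γ := Fin n), smul_smul,
        Finset.sum_smul]
    rw [this, Finset.sum_eq_single j]
    · rw [orth_diag]
    · intro i _ hi
      rw [orth n j i (Ne.symm hi), zero_smul]
    · intro hj; exact absurd (Finset.mem_univ j) hj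
  -- norm bound
  have hnorm : ∀ j : Fin n, ‖F j j‖ ≤ ∑ s : Fin n → Bool, ((2:ℝ)^n)⁻¹ * ‖S s j‖ := by
    intro j
    have h2 : (0:ℝ) < 2 ^ n := by positivity
    have : ‖((2:ℝ) ^ n) • F j j‖ ≤ ∑ s : Fin n → Bool, ‖S s j‖ := by
      rw [key j]
      refine (norm_sum_le _ _).trans (Finset.sum_le_sum fun s _ => ?_)
      rw [norm_smul]
      have : ‖eps (s j)‖ = 1 := by cases (s j) <;> simp [eps]
      rw [this, one_mul]
    rw [norm_smul, Real.norm_eq_abs, abs_of_pos h2] at this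
    rw [← Finset.mul_sum, inv_mul_eq_div, le_div_iff₀' h2]
    exact this
  -- per-sign bound on the p-sums
  have hsign : ∀ s : Fin n → Bool, ∑ j, ‖S s j‖ ^ p ≤ C ^ p := by
    intro s
    have hd := h (fun i => eps (s i)) (fun i => by cases hsi : s i <;> simp [eps, hsi])
    have hX : (0:ℝ) ≤ ∑ j, ‖S s j‖ ^ p :=
      Finset.sum_nonneg fun j _ => Real.rpow_nonneg (norm_nonneg _) _
    have h3 := Real.rpow_le_rpow (Real.rpow_nonneg hX _) hd hp0.le
    rwa [← Real.rpow_mul hX, one_div_mul_cancel hp0.ne', Real.rpow_one] at h3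
  -- Jensen
  have hw : ∑ _s : Fin n → Bool, ((2:ℝ)^n)⁻¹ = 1 := by
    simp [Finset.sum_const, Finset.card_univ]
  have jensen : ∀ j : Fin n,
      ‖F j j‖ ^ p ≤ ∑ s : Fin n → Bool, ((2:ℝ)^n)⁻¹ * ‖S s j‖ ^ p := by
    intro j
    have h1 : ‖F j j‖ ^ p ≤ (∑ s : Fin n → Bool, ((2:ℝ)^n)⁻¹ * ‖S s j‖) ^ p :=
      Real.rpow_le_rpow (norm_nonneg _) (hnorm j) hp0.le
    refine h1.trans ?_
    exact Real.rpow_arith_mean_le_arith_mean_rpow Finset.univ _ _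
      (fun s _ => by positivity) hw (fun s _ => norm_nonneg _) hp
  -- combine
  have hsum : ∑ j, ‖F j j‖ ^ p ≤ C ^ p := by
    calc ∑ j, ‖F j j‖ ^ p
        ≤ ∑ j, ∑ s : Fin n → Bool, ((2:ℝ)^n)⁻¹ * ‖S s j‖ ^ p :=
          Finset.sum_le_sum fun j _ => jensen j
      _ = ∑ s : Fin n → Bool, ((2:ℝ)^n)⁻¹ * ∑ j, ‖S s j‖ ^ p := by
          rw [Finset.sum_comm]; simp [Finset.mul_sum]
      _ ≤ ∑ s : Fin n → Bool, ((2:ℝ)^n)⁻¹ * C ^ p :=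
          Finset.sum_le_sum fun s _ => by
            have h2 : (0:ℝ) ≤ ((2:ℝ)^n)⁻¹ := by positivity
            exact mul_le_mul_of_nonneg_left (hsign s) h2
      _ = C ^ p := by rw [← Finset.sum_mul, hw, one_mul]
  have hX : (0:ℝ) ≤ ∑ j, ‖F j j‖ ^ p :=
    Finset.sum_nonneg fun j _ => Real.rpow_nonneg (norm_nonneg _) _
  have := Real.rpow_le_rpow hX hsum (by positivity : (0:ℝ) ≤ 1/p)
  rwa [← Real.rpow_mul hC, mul_one_div, div_self hp0.ne', Real.rpow_one] at this
end

section
/- Let (Ω, m) be a measure space and let 1 < p < ∞. Let R : B(L^1(Ω,m), L^p(Ω,m)) → L^p(Ω,m) be a bounded linear operator, where B(L^1, L^p) is the Banach space of bounded linear operators with the operator norm. Let (X_1,…,X_n) and (Y_1,…,Y_n) be measurable partitions of Ω. Then for every U ∈ B(L^1(Ω,m), L^p(Ω,m)): (∑_{i=1}^n ‖χ_{X_i} · R(χ_{Y_i} U)‖_p^p)^{1/p} ≤ ‖R‖ · ‖U‖, where χ_Y U denotes the operator a ↦ χ_Y · U(a). -/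
open MeasureTheory Set
open scoped ENNReal NNReal

/-- The operator `P_X : L^P → L^P`, `f ↦ χ_X · f`, of multiplication by the indicator
function of a measurable set `X`. -/
noncomputable def indicatorCLM {Ω : Type*} [MeasurableSpace Ω] (m : Measure Ω) (P : ℝ≥0∞)
    [Fact (1 ≤ P)] (X : Set Ω) (hX : MeasurableSet X) :
    Lp ℂ P m →L[ℂ] Lp ℂ P m :=
  LinearMap.mkContinuous
    { toFun := fun f => ((Lp.memLp f).indicator hX).toLp (X.indicator f)
      map_add' := by
        intro f g
        have key : X.indicator ⇑(f + g) =ᵐ[m] X.indicator ⇑f + X.indicator ⇑g := by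
          filter_upwards [Lp.coeFn_add f g] with t ht
          by_cases h : t ∈ X
          · rw [Pi.add_apply, Set.indicator_of_mem h, Set.indicator_of_mem h,
              Set.indicator_of_mem h, ht, Pi.add_apply]
          · rw [Pi.add_apply, Set.indicator_of_notMem h, Set.indicator_of_notMem h,
              Set.indicator_of_notMem h, add_zero]
        exact (MemLp.toLp_congr _
          (((Lp.memLp f).indicator hX).add ((Lp.memLp g).indicator hX)) key).trans
          (MemLp.toLp_add _ _)
      map_smul' := by
        intro c f
        have key : X.indicator ⇑(c • f) =ᵐ[m] c • X.indicator ⇑f := by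
          filter_upwards [Lp.coeFn_smul c f] with t ht
          by_cases h : t ∈ X
          · rw [Pi.smul_apply, Set.indicator_of_mem h, Set.indicator_of_mem h, ht, Pi.smul_apply]
          · rw [Pi.smul_apply, Set.indicator_of_notMem h, Set.indicator_of_notMem h, smul_zero]
        simp only [RingHom.id_apply]
        exact (MemLp.toLp_congr _
          (((Lp.memLp f).indicator hX).const_smul c) key).trans
          (MemLp.toLp_const_smul c _) }
    1 (by
      intro f
      simp only [LinearMap.coe_mk, AddHom.coe_mk, one_mul]
      rw [Lp.norm_toLp, Lp.norm_def]
      exact ENNReal.toReal_mono (Lp.eLpNorm_ne_top f) (eLpNorm_indicator_le _))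

/-! By disjointness of the `X i`, the left-hand side equals `‖∑ i, χ_{X i} R(χ_{Y i} U)‖`.
For a sign vector `ε ∈ {±1}ⁿ` the multipliers `S_X = ∑ i, ε i χ_{X i}` and
`S_Y = ∑ j, ε j χ_{Y j}` have norm at most one, so `‖S_X R(S_Y U)‖ ≤ ‖R‖ ‖U‖`. Expanding,
`S_X R(S_Y U) = ∑ i j, ε i ε j χ_{X i} R(χ_{Y j} U)`, and averaging over all `ε` kills the
off-diagonal terms, leaving the diagonal sum. -/

section SignAveraging

variable {ι : Type*} [Fintype ι]

theorem sum_units_int_mul_eq_zero [DecidableEq ι] {i j : ι} (hij : i ≠ j) :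
    ∑ ε : ι → ℤˣ, ((ε i * ε j : ℤˣ) : ℤ) = 0 := by
  -- flipping the sign of `ε i` permutes the sign vectors and negates every term
  have hflip := Equiv.sum_comp (Equiv.mulLeft (Pi.mulSingle i (-1) : ι → ℤˣ))
    fun ε : ι → ℤˣ => ((ε i * ε j : ℤˣ) : ℤ)
  simp only [Equiv.coe_mulLeft, Pi.mul_apply, Pi.mulSingle_eq_same, Pi.mulSingle_eq_of_ne' hij,
    neg_mul, one_mul, Units.val_neg, Finset.sum_neg_distrib] at hflip
  omega

theorem norm_sum_diag_le_of_forall_units_int {E : Type*} [NormedAddCommGroup E]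
    [NormedSpace ℝ E] (B : ι → ι → E) {C : ℝ}
    (hB : ∀ ε : ι → ℤˣ, ‖∑ i, ∑ j, ((ε i * ε j : ℤˣ) : ℤ) • B i j‖ ≤ C) :
    ‖∑ i, B i i‖ ≤ C := by
  classical
  have hsum : ∑ ε : ι → ℤˣ, ∑ i, ∑ j, ((ε i * ε j : ℤˣ) : ℤ) • B i j
      = (2 ^ Fintype.card ι : ℕ) • ∑ i, B i i := by
    rw [Finset.sum_comm, Finset.smul_sum]
    refine Finset.sum_congr rfl fun i _ => ?_
    rw [Finset.sum_comm, Finset.sum_eq_single i]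
    · simp [Int.units_mul_self]
    · intro j _ hji
      rw [← Finset.sum_smul, sum_units_int_mul_eq_zero hji.symm, zero_smul]
    · simp
  have h2pos : (0 : ℝ) < 2 ^ Fintype.card ι := by positivity
  refine le_of_mul_le_mul_left ?_ h2pos
  calc (2 : ℝ) ^ Fintype.card ι * ‖∑ i, B i i‖
      = ‖∑ ε : ι → ℤˣ, ∑ i, ∑ j, ((ε i * ε j : ℤˣ) : ℤ) • B i j‖ := by
        rw [hsum, RCLike.norm_nsmul ℝ]; simp
    _ ≤ ∑ _ε : ι → ℤˣ, C := norm_sum_le_of_le _ fun ε _ => hB ε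
    _ = 2 ^ Fintype.card ι * C := by simp

end SignAveraging

section DisjointIndicators

variable {α M : Type*} {ι : Type*} [Fintype ι] [AddCommMonoid M] {Z : ι → Set α}

theorem sum_indicator_apply_of_mem (hZ : Pairwise (Function.onFun Disjoint Z))
    (f : ι → α → M) {x : α} {i : ι} (hx : x ∈ Z i) :
    ∑ j, (Z j).indicator (f j) x = f i x := by
  rw [Finset.sum_eq_single i (fun j _ hji => indicator_of_notMem
    (disjoint_right.1 (hZ hji) hx) _) (by simp), indicator_of_mem hx]

theorem apply_sum_indicator_apply {N : Type*} [AddCommMonoid N]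
    (hZ : Pairwise (Function.onFun Disjoint Z)) {φ : M → N} (hφ : φ 0 = 0)
    (f : ι → α → M) (x : α) :
    φ (∑ j, (Z j).indicator (f j) x) = ∑ j, φ ((Z j).indicator (f j) x) := by
  by_cases hx : ∃ i, x ∈ Z i
  · obtain ⟨i, hi⟩ := hx
    rw [sum_indicator_apply_of_mem hZ f hi, Finset.sum_eq_single i (fun j _ hji => by
      rw [indicator_of_notMem (disjoint_right.1 (hZ hji) hi), hφ]) (by simp),
      indicator_of_mem hi]
  · push Not at hx
    simp [indicator_of_notMem (hx _), hφ]

end DisjointIndicators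

theorem MeasureTheory.Lp.norm_rpow_eq_integral {Ω E : Type*} [MeasurableSpace Ω]
    {m : Measure Ω} {P : ℝ≥0∞} [NormedAddCommGroup E] (hP₀ : P ≠ 0) (hP : P ≠ ∞)
    (f : Lp E P m) : ‖f‖ ^ P.toReal = ∫ x, ‖f x‖ ^ P.toReal ∂m := by
  rw [Lp.norm_def, toReal_eLpNorm (Lp.aestronglyMeasurable f),
    lpNorm_eq_integral_norm_rpow_toReal hP₀ hP (Lp.aestronglyMeasurable f),
    Real.rpow_inv_rpow (integral_nonneg fun _ => by positivity)
      (ENNReal.toReal_pos hP₀ hP).ne']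

section IndicatorCLM

variable {Ω : Type*} [MeasurableSpace Ω] {m : Measure Ω} {P : ℝ≥0∞} [Fact (1 ≤ P)]
  {ι : Type*} [Fintype ι] {Z : ι → Set Ω}

theorem indicatorCLM_ae_eq (X : Set Ω) (hX : MeasurableSet X) (f : Lp ℂ P m) :
    ⇑(indicatorCLM m P X hX f) =ᵐ[m] X.indicator f := by
  simp only [indicatorCLM, LinearMap.mkContinuous_apply, LinearMap.coe_mk, AddHom.coe_mk]
  exact MemLp.coeFn_toLp _

theorem norm_sum_smul_indicatorCLM_le (hZ : ∀ i, MeasurableSet (Z i))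
    (hZd : Pairwise (Function.onFun Disjoint Z)) {c : ι → ℂ} (hc : ∀ i, ‖c i‖ ≤ 1) :
    ‖∑ i, c i • indicatorCLM m P (Z i) (hZ i)‖ ≤ 1 := by
  refine ContinuousLinearMap.opNorm_le_bound _ zero_le_one fun g => ?_
  rw [one_mul, sum_apply]
  simp only [smul_apply]
  refine Lp.norm_le_norm_of_ae_le ?_
  have hterms : ∀ᵐ x ∂m, ∀ i, (c i • indicatorCLM m P (Z i) (hZ i) g) x
      = (Z i).indicator (fun y => c i • g y) x := by
    refine ae_all_iff.2 fun i => ?_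
    filter_upwards [Lp.coeFn_smul (c i) (indicatorCLM m P (Z i) (hZ i) g),
      indicatorCLM_ae_eq (Z i) (hZ i) g] with x hsmul hind
    rw [hsmul, Pi.smul_apply, hind, indicator_const_smul_apply]
  filter_upwards [Lp.coeFn_fun_finsetSum Finset.univ
    (fun i => c i • indicatorCLM m P (Z i) (hZ i) g), hterms] with x hsum hterms
  rw [hsum]
  simp only [hterms]
  by_cases hx : ∃ i, x ∈ Z i
  · obtain ⟨i, hi⟩ := hx
    rw [sum_indicator_apply_of_mem hZd _ hi, norm_smul]
    exact mul_le_of_le_one_left (norm_nonneg _) (hc i)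
  · push Not at hx
    simp [indicator_of_notMem (hx _)]

theorem sum_norm_indicatorCLM_rpow (hZ : ∀ i, MeasurableSet (Z i))
    (hZd : Pairwise (Function.onFun Disjoint Z)) (hP : P ≠ ∞) (f : ι → Lp ℂ P m) :
    ∑ i, ‖indicatorCLM m P (Z i) (hZ i) (f i)‖ ^ P.toReal
      = ‖∑ i, indicatorCLM m P (Z i) (hZ i) (f i)‖ ^ P.toReal := by
  have hP₀ : P ≠ 0 := (zero_lt_one.trans_le Fact.out).ne'
  simp only [Lp.norm_rpow_eq_integral hP₀ hP]
  rw [← integral_finsetSum _ fun i _ => (Lp.memLp _).integrable_norm_rpow hP₀ hP]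
  refine integral_congr_ae ?_
  filter_upwards [Lp.coeFn_fun_finsetSum Finset.univ
      (fun i => indicatorCLM m P (Z i) (hZ i) (f i)),
    ae_all_iff.2 fun i => indicatorCLM_ae_eq (Z i) (hZ i) (f i)] with x hsum hind
  have hφ : ‖(0 : ℂ)‖ ^ P.toReal = 0 := by simp [(ENNReal.toReal_pos hP₀ hP).ne']
  simp only [hsum, hind]
  exact (apply_sum_indicator_apply hZd (φ := (‖·‖ ^ P.toReal)) hφ _ x).symm

end IndicatorCLM

theorem stmt17_general {Ω : Type*} [MeasurableSpace Ω] (m : Measure Ω)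
    (p : ℝ) (hp : 1 < p) [Fact (1 ≤ ENNReal.ofReal p)]
    (R : (Lp ℂ 1 m →L[ℂ] Lp ℂ (ENNReal.ofReal p) m) →L[ℂ] Lp ℂ (ENNReal.ofReal p) m)
    (n : ℕ) (X Y : Fin n → Set Ω)
    (hX : ∀ i, MeasurableSet (X i)) (hY : ∀ i, MeasurableSet (Y i))
    (hXd : Pairwise (Function.onFun Disjoint X))
    (hYd : Pairwise (Function.onFun Disjoint Y))
    (U : Lp ℂ 1 m →L[ℂ] Lp ℂ (ENNReal.ofReal p) m) :
    (∑ i, ‖indicatorCLM m (ENNReal.ofReal p) (X i) (hX i)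
        (R ((indicatorCLM m (ENNReal.ofReal p) (Y i) (hY i)).comp U))‖ ^ p) ^ (1 / p) ≤
      ‖R‖ * ‖U‖ := by
  have hp₀ : 0 < p := zero_lt_one.trans hp
  have hdisj := sum_norm_indicatorCLM_rpow hX hXd ENNReal.ofReal_ne_top
    fun i => R ((indicatorCLM m (ENNReal.ofReal p) (Y i) (hY i)).comp U)
  rw [ENNReal.toReal_ofReal hp₀.le] at hdisj
  rw [hdisj, ← Real.rpow_mul (norm_nonneg _), mul_one_div_cancel hp₀.ne', Real.rpow_one]
  refine norm_sum_diag_le_of_forall_units_int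
    (fun i j => indicatorCLM m (ENNReal.ofReal p) (X i) (hX i)
      (R ((indicatorCLM m (ENNReal.ofReal p) (Y j) (hY j)).comp U))) fun ε => ?_
  have hε : ∀ i, ‖((ε i : ℤ) : ℂ)‖ ≤ 1 := fun i => by
    rcases Int.units_eq_one_or (ε i) with h | h <;> simp [h]
  set SX := ∑ i, ((ε i : ℤ) : ℂ) • indicatorCLM m (ENNReal.ofReal p) (X i) (hX i)
  set SY := ∑ i, ((ε i : ℤ) : ℂ) • indicatorCLM m (ENNReal.ofReal p) (Y i) (hY i)
  calc _ = ‖SX (R (SY.comp U))‖ := by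
        simp only [SX, SY, Units.val_mul, ← Int.cast_smul_eq_zsmul ℂ, Int.cast_mul,
          ContinuousLinearMap.finsetSum_comp, ContinuousLinearMap.smul_comp, map_sum, map_smul,
          sum_apply, smul_apply, Finset.smul_sum, smul_smul]
        rw [Finset.sum_comm]
        simp only [mul_comm]
    _ ≤ ‖SX‖ * (‖R‖ * (‖SY‖ * ‖U‖)) :=
      SX.le_opNorm_of_le (R.le_opNorm_of_le (SY.opNorm_comp_le U))
    _ ≤ 1 * (‖R‖ * (1 * ‖U‖)) := by
      gcongr
      exacts [norm_sum_smul_indicatorCLM_le hX hXd hε, norm_sum_smul_indicatorCLM_le hY hYd hε]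
    _ = ‖R‖ * ‖U‖ := by ring

/-- let `(Ω, m)` be a measure space, `1 < p < ∞`, let
`R : B(L^1, L^p) → L^p` be a bounded linear operator, and let `(X_i)`, `(Y_i)` be
measurable partitions of `Ω`.  Then for every bounded operator `U : L^1 → L^p`:
`(∑_i ‖χ_{X_i}·R(χ_{Y_i}U)‖_p^p)^{1/p} ≤ ‖R‖·‖U‖`, where `(χ_Y U)(a) = χ_Y·U(a)`. -/
theorem stmt17 {Ω : Type*} [MeasurableSpace Ω] (m : Measure Ω)
    (p : ℝ) (hp : 1 < p) [Fact (1 ≤ ENNReal.ofReal p)]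
    (R : (Lp ℂ 1 m →L[ℂ] Lp ℂ (ENNReal.ofReal p) m) →L[ℂ] Lp ℂ (ENNReal.ofReal p) m)
    (n : ℕ) (X Y : Fin n → Set Ω)
    (hX : ∀ i, MeasurableSet (X i)) (hY : ∀ i, MeasurableSet (Y i))
    (hXd : Pairwise (Function.onFun Disjoint X)) (hXu : (⋃ i, X i) = Set.univ)
    (hYd : Pairwise (Function.onFun Disjoint Y)) (hYu : (⋃ i, Y i) = Set.univ)
    (U : Lp ℂ 1 m →L[ℂ] Lp ℂ (ENNReal.ofReal p) m) :
    (∑ i, ‖indicatorCLM m (ENNReal.ofReal p) (X i) (hX i)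
        (R ((indicatorCLM m (ENNReal.ofReal p) (Y i) (hY i)).comp U))‖ ^ p) ^ (1 / p) ≤
      ‖R‖ * ‖U‖ :=
  stmt17_general m p hp R n X Y hX hY hXd hYd U
end

section
/- Let (Ω, m) be a measure space, let 1 < p < ∞ with conjugate exponent p', let U : L^1(Ω,m) → L^p(Ω,m) be a bounded linear operator, let f_1,…,f_n ∈ L^{p'}(Ω,m) satisfy f_i·f_j = 0 almost everywhere for i ≠ j, and let x_1,…,x_n ∈ L^p(Ω,m) satisfy x_i·x_j = 0 almost everywhere for i ≠ j. Define T : L^1(Ω,m) → L^p(Ω,m) by T(a) = ∑_{i=1}^n (∫_Ω U(a)·f_i dm) x_i. Then T is bounded with ‖T‖ ≤ ‖U‖ · max_{1≤i≤n} ‖f_i‖_{p'}·‖x_i‖_p. -/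
/-! With `g = U a` and `cᵢ = ∫ g fᵢ`, disjointness of the supports of the `xᵢ` gives
`‖∑ cᵢ xᵢ‖ₚᵖ = ∑ ‖cᵢ‖ᵖ ‖xᵢ‖ₚᵖ`. Hölder's inequality on the support `Aᵢ` of `fᵢ` gives
`‖cᵢ‖ ≤ ‖g‖_{Lᵖ(Aᵢ)} ‖fᵢ‖_{p'}`, and since the `Aᵢ` are a.e. disjoint,
`∑ ‖g‖_{Lᵖ(Aᵢ)}ᵖ ≤ ‖g‖ₚᵖ ≤ (‖U‖ ‖a‖)ᵖ`. -/

open MeasureTheory Function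
open scoped ENNReal

theorem apply_sum_of_pairwise_eq_zero_or_eq_zero {ι E M : Type*} [Fintype ι] [AddCommMonoid E]
    [AddCommMonoid M] (φ : E → M) (hφ : φ 0 = 0) {g : ι → E}
    (hg : ∀ i j, i ≠ j → g i = 0 ∨ g j = 0) :
    φ (∑ i, g i) = ∑ i, φ (g i) := by
  by_cases h : ∃ i, g i ≠ 0
  · obtain ⟨i, hi⟩ := h
    have hzero : ∀ j, j ≠ i → g j = 0 := fun j hj => (hg j i hj).resolve_right hi
    rw [Finset.sum_eq_single i (fun j _ hj => hzero j hj) (by simp),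
      Finset.sum_eq_single i (fun j _ hj => by rw [hzero j hj, hφ]) (by simp)]
  · push Not at h
    simp [h, hφ]

namespace MeasureTheory

variable {α ι : Type*} [MeasurableSpace α] {μ : Measure α}

theorem ae_pairwise_eq_zero_or_eq_zero_of_mul [Countable ι] {M₀ : Type*} [MulZeroClass M₀]
    [NoZeroDivisors M₀] {u : ι → α → M₀}
    (hu : ∀ i j, i ≠ j → (fun t => u i t * u j t) =ᵐ[μ] 0) :
    ∀ᵐ t ∂μ, ∀ i j, i ≠ j → u i t = 0 ∨ u j t = 0 := by
  simp only [ae_all_iff]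
  intro i j hij
  filter_upwards [hu i j hij] with t ht using mul_eq_zero.mp ht

theorem aedisjoint_support_of_mul_ae_eq_zero {M₀ : Type*} [MulZeroClass M₀] [NoZeroDivisors M₀]
    {u v : α → M₀} (h : (fun t => u t * v t) =ᵐ[μ] 0) :
    AEDisjoint μ (support u) (support v) := by
  rw [AEDisjoint, ← support_mul]
  exact (Measure.measure_support_eq_zero_iff μ).2 h

variable {E : Type*} [NormedAddCommGroup E] {p : ℝ≥0∞}

theorem eLpNorm_rpow_toReal_eq_lintegral (hp0 : p ≠ 0) (hp_top : p ≠ ∞) (f : α → E) :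
    eLpNorm f p μ ^ p.toReal = ∫⁻ t, ‖f t‖ₑ ^ p.toReal ∂μ := by
  rw [eLpNorm_eq_eLpNorm' hp0 hp_top,
    lintegral_rpow_enorm_eq_rpow_eLpNorm' (ENNReal.toReal_pos hp0 hp_top)]

theorem Lp.coeFn_sum (s : Finset ι) (g : ι → Lp E p μ) :
    ⇑(∑ i ∈ s, g i) =ᵐ[μ] ∑ i ∈ s, ⇑(g i) := by
  induction s using Finset.cons_induction with
  | empty => simpa using Lp.coeFn_zero E p μ
  | cons i s _ ih =>
    simp only [Finset.sum_cons]
    exact (Lp.coeFn_add _ _).trans ih.add_left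

variable [Fintype ι]

theorem eLpNorm_sum_rpow_of_ae_disjoint (hp0 : p ≠ 0) (hp_top : p ≠ ∞) {g : ι → α → E}
    (hg : ∀ i, AEStronglyMeasurable (g i) μ)
    (hdisj : ∀ᵐ t ∂μ, ∀ i j, i ≠ j → g i t = 0 ∨ g j t = 0) :
    eLpNorm (∑ i, g i) p μ ^ p.toReal = ∑ i, eLpNorm (g i) p μ ^ p.toReal := by
  have hp : 0 < p.toReal := ENNReal.toReal_pos hp0 hp_top
  simp only [eLpNorm_rpow_toReal_eq_lintegral hp0 hp_top]
  rw [← lintegral_finsetSum' _ fun i _ => (hg i).enorm.pow_const _]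
  refine lintegral_congr_ae ?_
  filter_upwards [hdisj] with t ht
  rw [Finset.sum_apply]
  exact apply_sum_of_pairwise_eq_zero_or_eq_zero (fun v : E => ‖v‖ₑ ^ p.toReal)
    (by simp [ENNReal.zero_rpow_of_pos hp]) ht

theorem sum_eLpNorm_restrict_rpow_le (hp0 : p ≠ 0) (hp_top : p ≠ ∞) (f : α → E)
    {s : ι → Set α} (hs : ∀ i, NullMeasurableSet (s i) μ) (hdisj : Pairwise (AEDisjoint μ on s)) :
    ∑ i, eLpNorm f p (μ.restrict (s i)) ^ p.toReal ≤ eLpNorm f p μ ^ p.toReal := by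
  simp only [eLpNorm_rpow_toReal_eq_lintegral hp0 hp_top]
  rw [← lintegral_biUnion_finset₀ (fun i _ j _ hij => hdisj hij) fun i _ => hs i]
  exact setLIntegral_le_lintegral _ _

variable {𝕜 : Type*} [RCLike 𝕜] {q : ℝ≥0∞} [p.HolderConjugate q]

theorem enorm_integral_mul_le_eLpNorm_restrict_support_mul {G F : α → 𝕜}
    (hG : AEStronglyMeasurable G μ) (hF : AEStronglyMeasurable F μ) :
    ‖∫ t, G t * F t ∂μ‖ₑ ≤ eLpNorm G p (μ.restrict (support F)) * eLpNorm F q μ := by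
  set ν := μ.restrict (support F)
  calc ‖∫ t, G t * F t ∂μ‖ₑ = ‖∫ t, G t * F t ∂ν‖ₑ := by
        rw [setIntegral_eq_integral_of_forall_compl_eq_zero fun t ht => by
          simp [notMem_support.mp ht]]
    _ ≤ eLpNorm (fun t => G t * F t) 1 ν := by
        rw [eLpNorm_one_eq_lintegral_enorm]
        exact enorm_integral_le_lintegral_enorm _
    _ ≤ eLpNorm G p ν * eLpNorm F q ν := by
        simpa using eLpNorm_le_eLpNorm_mul_eLpNorm_of_nnnorm hG.restrict hF.restrict
          (· * ·) 1 (.of_forall fun t => by simp)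
    _ ≤ eLpNorm G p ν * eLpNorm F q μ := by
        gcongr
        exact Measure.restrict_le_self

theorem eLpNorm_sum_integral_mul_smul_le [NormedSpace 𝕜 E] (hp_top : p ≠ ∞) {G : α → 𝕜}
    {f : ι → α → 𝕜} {x : ι → α → E} (hG : AEStronglyMeasurable G μ)
    (hf : ∀ i, AEStronglyMeasurable (f i) μ) (hx : ∀ i, AEStronglyMeasurable (x i) μ)
    (hf_disj : ∀ i j, i ≠ j → (fun t => f i t * f j t) =ᵐ[μ] 0)
    (hx_disj : ∀ᵐ t ∂μ, ∀ i j, i ≠ j → x i t = 0 ∨ x j t = 0)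
    {M : ℝ≥0∞} (hM : ∀ i, eLpNorm (f i) q μ * eLpNorm (x i) p μ ≤ M) :
    eLpNorm (∑ i, (∫ t, G t * f i t ∂μ) • x i) p μ ≤ eLpNorm G p μ * M := by
  have hp0 : p ≠ 0 := ENNReal.HolderConjugate.ne_zero p q
  have hp : 0 < p.toReal := ENNReal.toReal_pos hp0 hp_top
  set c : ι → 𝕜 := fun i => ∫ t, G t * f i t ∂μ
  set A : ι → Set α := fun i => support (f i)
  have hc : ∀ i, ‖c i‖ₑ * eLpNorm (x i) p μ ≤ eLpNorm G p (μ.restrict (A i)) * M := fun i =>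
    calc ‖c i‖ₑ * eLpNorm (x i) p μ
        ≤ eLpNorm G p (μ.restrict (A i)) * eLpNorm (f i) q μ * eLpNorm (x i) p μ := by
          gcongr
          exact enorm_integral_mul_le_eLpNorm_restrict_support_mul hG (hf i)
      _ ≤ eLpNorm G p (μ.restrict (A i)) * M := by
          rw [mul_assoc]
          gcongr
          exact hM i
  rw [← ENNReal.rpow_le_rpow_iff hp]
  calc eLpNorm (∑ i, c i • x i) p μ ^ p.toReal
      = ∑ i, (‖c i‖ₑ * eLpNorm (x i) p μ) ^ p.toReal := by
        rw [eLpNorm_sum_rpow_of_ae_disjoint hp0 hp_top (fun i => (hx i).const_smul (c i))]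
        · simp only [eLpNorm_const_smul]
        · filter_upwards [hx_disj] with t ht i j hij
          rcases ht i j hij with h | h <;> simp [h]
    _ ≤ ∑ i, eLpNorm G p (μ.restrict (A i)) ^ p.toReal * M ^ p.toReal := by
        gcongr with i
        rw [← ENNReal.mul_rpow_of_nonneg _ _ hp.le]
        exact ENNReal.rpow_le_rpow (hc i) hp.le
    _ = (∑ i, eLpNorm G p (μ.restrict (A i)) ^ p.toReal) * M ^ p.toReal := by
        rw [Finset.sum_mul]
    _ ≤ eLpNorm G p μ ^ p.toReal * M ^ p.toReal := by
        gcongr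
        exact sum_eLpNorm_restrict_rpow_le hp0 hp_top G
          (fun i => (hf i).aemeasurable.nullMeasurable (measurableSet_singleton 0).compl)
          fun i j hij => aedisjoint_support_of_mul_ae_eq_zero (hf_disj i j hij)
    _ = (eLpNorm G p μ * M) ^ p.toReal := (ENNReal.mul_rpow_of_nonneg _ _ hp.le).symm

theorem Lp.norm_sum_integral_mul_smul_le [NormedSpace 𝕜 E] (hp_top : p ≠ ∞) (G : Lp 𝕜 p μ)
    (f : ι → Lp 𝕜 q μ) (x : ι → Lp E p μ)
    (hf_disj : ∀ i j, i ≠ j → (fun t => f i t * f j t) =ᵐ[μ] 0)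
    (hx_disj : ∀ᵐ t ∂μ, ∀ i j, i ≠ j → x i t = 0 ∨ x j t = 0) :
    ‖∑ i, (∫ t, G t * f i t ∂μ) • x i‖ ≤ ‖G‖ * ⨆ i, ‖f i‖ * ‖x i‖ := by
  have : Fact (1 ≤ p) := ⟨ENNReal.HolderConjugate.one_le p q⟩
  have : Fact (1 ≤ q) := ⟨ENNReal.HolderConjugate.one_le q p⟩
  set c : ι → 𝕜 := fun i => ∫ t, G t * f i t ∂μ
  set M := ⨆ i, ‖f i‖ * ‖x i‖
  have hM : ∀ i, eLpNorm (f i) q μ * eLpNorm (x i) p μ ≤ ENNReal.ofReal M := fun i => by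
    rw [← Lp.enorm_def, ← Lp.enorm_def, ← ofReal_norm, ← ofReal_norm,
      ← ENNReal.ofReal_mul (norm_nonneg _)]
    exact ENNReal.ofReal_le_ofReal
      (le_ciSup (f := fun i => ‖f i‖ * ‖x i‖) (Set.finite_range _).bddAbove i)
  have hcoe : ⇑(∑ i, c i • x i) =ᵐ[μ] ∑ i, c i • ⇑(x i) := by
    refine (Lp.coeFn_sum _ _).trans ?_
    filter_upwards [ae_all_iff.mpr fun i => Lp.coeFn_smul (c i) (x i)] with t ht
    simp only [Finset.sum_apply, ht]
  rw [Lp.norm_def, eLpNorm_congr_ae hcoe]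
  refine ENNReal.toReal_le_of_le_ofReal
    (mul_nonneg (norm_nonneg _) (Real.iSup_nonneg fun i => by positivity)) ?_
  calc eLpNorm (∑ i, c i • ⇑(x i)) p μ ≤ eLpNorm G p μ * ENNReal.ofReal M :=
        eLpNorm_sum_integral_mul_smul_le hp_top (Lp.aestronglyMeasurable G)
          (fun i => Lp.aestronglyMeasurable (f i)) (fun i => Lp.aestronglyMeasurable (x i))
          hf_disj hx_disj hM
    _ = ENNReal.ofReal (‖G‖ * M) := by
        rw [ENNReal.ofReal_mul (norm_nonneg _), ofReal_norm, Lp.enorm_def]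

end MeasureTheory

theorem stmt18_general {Ω : Type*} [MeasurableSpace Ω] (m : Measure Ω)
    (p p' : ℝ) (hpp' : p.HolderConjugate p')
    [Fact (1 ≤ ENNReal.ofReal p)]
    (U : Lp ℂ 1 m →L[ℂ] Lp ℂ (ENNReal.ofReal p) m)
    (n : ℕ) (f : Fin n → Lp ℂ (ENNReal.ofReal p') m)
    (hf : ∀ i j, i ≠ j → (fun t => (f i : Ω → ℂ) t * (f j : Ω → ℂ) t) =ᵐ[m] 0)
    (x : Fin n → Lp ℂ (ENNReal.ofReal p) m)
    (hx : ∀ i j, i ≠ j → (fun t => (x i : Ω → ℂ) t * (x j : Ω → ℂ) t) =ᵐ[m] 0)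
    (a : Lp ℂ 1 m) :
    ‖∑ i, (∫ t, (U a : Ω → ℂ) t * (f i : Ω → ℂ) t ∂m) • x i‖ ≤
      (‖U‖ * ⨆ i, ‖f i‖ * ‖x i‖) * ‖a‖ := by
  have := hpp'.ennrealOfReal
  have hM : 0 ≤ ⨆ i, ‖f i‖ * ‖x i‖ :=
    Real.iSup_nonneg fun i => mul_nonneg ENNReal.toReal_nonneg ENNReal.toReal_nonneg
  calc _ ≤ ‖U a‖ * ⨆ i, ‖f i‖ * ‖x i‖ :=
        Lp.norm_sum_integral_mul_smul_le ENNReal.ofReal_ne_top (U a) f x hf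
          (ae_pairwise_eq_zero_or_eq_zero_of_mul hx)
    _ ≤ ‖U‖ * ‖a‖ * ⨆ i, ‖f i‖ * ‖x i‖ := by gcongr; exact U.le_opNorm a
    _ = (‖U‖ * ⨆ i, ‖f i‖ * ‖x i‖) * ‖a‖ := by ring

/-- let `(Ω, m)` be a measure space, `1 < p < ∞` with conjugate exponent
`p'`, let `U : L^1(Ω,m) → L^p(Ω,m)` be a bounded linear operator, let
`f_1,…,f_n ∈ L^{p'}(Ω,m)` have pairwise a.e. disjoint supports and let
`x_1,…,x_n ∈ L^p(Ω,m)` have pairwise a.e. disjoint supports.  Then the operator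
`T : a ↦ ∑_i (∫ U(a)·f_i dm) x_i` (the sum of the rank-one operators `x_i ⊗ U'(f_i)`)
is bounded with `‖T‖ ≤ ‖U‖ · max_i ‖f_i‖_{p'}·‖x_i‖_p`, i.e.
`‖T(a)‖_p ≤ (‖U‖ · max_i ‖f_i‖·‖x_i‖) · ‖a‖_1` for every `a`. -/
theorem stmt18 {Ω : Type*} [MeasurableSpace Ω] (m : Measure Ω)
    (p p' : ℝ) (hp : 1 < p) (hpp' : p.HolderConjugate p')
    [Fact (1 ≤ ENNReal.ofReal p)] [Fact (1 ≤ ENNReal.ofReal p')]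
    (U : Lp ℂ 1 m →L[ℂ] Lp ℂ (ENNReal.ofReal p) m)
    (n : ℕ) (f : Fin n → Lp ℂ (ENNReal.ofReal p') m)
    (hf : ∀ i j, i ≠ j → (fun t => (f i : Ω → ℂ) t * (f j : Ω → ℂ) t) =ᵐ[m] 0)
    (x : Fin n → Lp ℂ (ENNReal.ofReal p) m)
    (hx : ∀ i j, i ≠ j → (fun t => (x i : Ω → ℂ) t * (x j : Ω → ℂ) t) =ᵐ[m] 0)
    (a : Lp ℂ 1 m) :
    ‖∑ i, (∫ t, (U a : Ω → ℂ) t * (f i : Ω → ℂ) t ∂m) • x i‖ ≤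
      (‖U‖ * ⨆ i, ‖f i‖ * ‖x i‖) * ‖a‖ :=
  stmt18_general m p p' hpp' U n f hf x hx a
end
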